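/- arXiv:2103.12771 — 9 statements merged into one kernel-verified Lean document; each statement's English description precedes it below -/
import Mathlib

section
/- For every natural number k ≥ 1, b^k ∘ a^k = ∏_{m=0}^{k−1} (b ∘ a − m • id_V), where the factors (b ∘ a − m • id_V) pairwise commute so the product may be taken in any order. -/
/-- Let `V` be a complex vector space and `a, b : V → V` be `ℂ`-linear maps satisfying
the Heisenberg relation `a ∘ b − b ∘ a = id`. Then for every `k ≥ 1`,
`b^k ∘ a^k = ∏_{m=0}^{k−1} (b ∘ a − m • id)`, where the factors pairwise commute
(so the product may be taken in any order). -/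
theorem pow_raising_pow_lowering_eq_prod_eulerCartan
    {V : Type*} [AddCommGroup V] [Module ℂ V]
    (a b : Module.End ℂ V) (hab : a * b - b * a = 1)
    (k : ℕ) (hk : 1 ≤ k) :
    b ^ k * a ^ k = ((List.range k).map fun m => b * a - (m : ℂ) • (1 : Module.End ℂ V)).prod ∧
      ∀ m m' : ℕ,
        Commute (b * a - (m : ℂ) • (1 : Module.End ℂ V))
          (b * a - (m' : ℂ) • (1 : Module.End ℂ V)) := by
  have hab' : a * b = b * a + 1 := by rw [← hab]; abel
  have h1 : (b * a) * a = a * (b * a) - a := by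
    rw [← mul_assoc, hab', add_mul, one_mul]
    abel
  -- key: (b*a) * a^k = a^k * (b*a - k•1)
  have key : ∀ k : ℕ, (b * a) * a ^ k = a ^ k * (b * a - (k : ℂ) • (1 : Module.End ℂ V)) := by
    intro k
    induction k with
    | zero => simp
    | succ n ih =>
      push_cast
      calc (b * a) * a ^ (n + 1) = ((b * a) * a ^ n) * a := by rw [pow_succ, ← mul_assoc]
        _ = a ^ n * ((b * a - (n : ℂ) • 1) * a) := by rw [ih, mul_assoc]
        _ = a ^ n * ((b * a) * a - (n : ℂ) • a) := by
            rw [sub_mul, smul_mul_assoc, one_mul]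
        _ = a ^ n * (a * (b * a) - a - (n : ℂ) • a) := by rw [h1]
        _ = a ^ n * (a * (b * a - ((n : ℂ) + 1) • 1)) := by
            congr 1
            rw [mul_sub, mul_smul_comm, mul_one, add_smul, one_smul]
            abel
        _ = a ^ (n + 1) * (b * a - ((n : ℂ) + 1) • 1) := by rw [pow_succ, mul_assoc]
  constructor
  · clear hk
    induction k with
    | zero => simp
    | succ n ih =>
      simp only [bind_pure_comp, List.map_eq_map, List.map_map] at ih ⊢
      rw [List.range_succ, List.map_append, List.prod_append, ← ih]
      simp only [List.map_cons, List.map_nil, List.prod_cons, List.prod_nil, mul_one,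
        Function.comp_apply]
      calc b ^ (n + 1) * a ^ (n + 1) = b ^ n * ((b * a) * a ^ n) := by
            rw [pow_succ, pow_succ', mul_assoc, ← mul_assoc b a]
        _ = b ^ n * a ^ n * (b * a - (n : ℂ) • 1) := by rw [key, mul_assoc]
  · intro m m'
    have h1 : Commute (b * a) ((m' : ℂ) • (1 : Module.End ℂ V)) :=
      (Commute.one_right _).smul_right _
    have h2 : Commute ((m : ℂ) • (1 : Module.End ℂ V)) (b * a) :=
      (Commute.one_left _).smul_left _
    have h3 : Commute ((m : ℂ) • (1 : Module.End ℂ V)) ((m' : ℂ) • (1 : Module.End ℂ V)) :=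
      ((Commute.one_left _).smul_left _).smul_right _
    exact ((Commute.refl _).sub_right h1).sub_left (h2.sub_right h3)
end

section
/- If h, g ∈ ker a and m, n ∈ ℕ with m ≠ n, then ⟪bⁿ h, b^m g⟫ = 0. In particular the subspaces L_n = b^{n−1}(ker a) are pairwise orthogonal. -/
/-- Let `V` be a complex inner product space, and `a, b : V → V` be `ℂ`-linear maps with
`a ∘ b − b ∘ a = id` and `⟪b x, y⟫ = ⟪x, a y⟫` for all `x, y`. If `h, g ∈ ker a` and
`m ≠ n`, then `⟪bⁿ h, b^m g⟫ = 0`: the subspaces `L_n = b^(n−1)(ker a)` are pairwise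
orthogonal. -/
theorem orthogonality_of_lifted_vacuum_spaces
    {V : Type*} [NormedAddCommGroup V] [InnerProductSpace ℂ V]
    (a b : Module.End ℂ V) (hab : a * b - b * a = 1)
    (hadj : ∀ x y : V, (inner ℂ ((b : V →ₗ[ℂ] V) x) y : ℂ) = inner ℂ x ((a : V →ₗ[ℂ] V) y))
    (h g : V) (hh : a h = 0) (hg : a g = 0)
    (m n : ℕ) (hmn : m ≠ n) :
    (inner ℂ ((b ^ n) h) ((b ^ m) g) : ℂ) = 0 := by
  have hab' : ∀ v : V, a (b v) = b (a v) + v := by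
    intro v
    have := congrArg (fun f : Module.End ℂ V => f v) hab
    simpa [Module.End.mul_apply, sub_eq_iff_eq_add, add_comm] using this
  -- a (b^m g) = m • b^(m-1) g
  have key : ∀ (m : ℕ) (g : V), a g = 0 → a ((b ^ m) g) = m • ((b ^ (m - 1)) g) := by
    intro m
    induction m with
    | zero => intro g hg; simpa using hg
    | succ k ih =>
      intro g hg
      have h1 : (b ^ (k + 1)) g = b ((b ^ k) g) := by
        rw [pow_succ']; rfl
      rw [h1, hab' ((b ^ k) g), ih g hg]
      cases k with
      | zero => simp
      | succ j =>
        have h2 : b ((b ^ (j + 1 - 1)) g) = (b ^ (j + 1)) g := by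
          rw [Nat.add_sub_cancel, pow_succ']; rfl
        rw [map_nsmul, h2]
        simp [succ_nsmul]
  -- main induction on n
  induction n generalizing m with
  | zero =>
    obtain ⟨m', rfl⟩ : ∃ m', m = m' + 1 := ⟨m - 1, by omega⟩
    have h1 : (b ^ (m' + 1)) g = b ((b ^ m') g) := by rw [pow_succ']; rfl
    rw [h1]
    have : (inner ℂ (b ((b ^ m') g)) ((b^(0:ℕ)) h) : ℂ) = 0 := by
      rw [hadj]
      simp [hh]
    have h2 := congrArg (starRingEnd ℂ) this
    rw [inner_conj_symm] at h2
    simpa using h2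
  | succ k ih =>
    have h1 : (b ^ (k + 1)) h = b ((b ^ k) h) := by rw [pow_succ']; rfl
    rw [h1, hadj, key m g hg, ← Nat.cast_smul_eq_nsmul ℂ, inner_smul_right]
    cases m with
    | zero => simp
    | succ j =>
      have : (inner ℂ ((b ^ k) h) ((b ^ (j + 1 - 1)) g) : ℂ) = 0 := ih j (by omega)
      rw [this, mul_zero]
end

section
/- If h ∈ ker a, then for every n ∈ ℕ one has ‖bⁿ h‖² = n! · ‖h‖². Consequently the map (1/√(n!)) • bⁿ sends ker a isometrically onto L_{n+1}. -/
private lemma comm_pow {V : Type*} [NormedAddCommGroup V] [InnerProductSpace ℂ V]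
    (a b : Module.End ℂ V) (hab : a * b - b * a = 1) (n : ℕ) :
    a * b ^ n = b ^ n * a + (n : ℂ) • b ^ (n - 1) := by
  induction n with
  | zero => simp
  | succ n ih =>
    have hab' : a * b = b * a + 1 := by rw [← hab]; abel
    rcases Nat.eq_zero_or_pos n with h0 | hpos
    · subst h0; simpa using hab'
    · have : a * b ^ (n + 1) = (a * b ^ n) * b := by
        rw [pow_succ, mul_assoc]
      rw [this, ih, add_mul, smul_mul_assoc, mul_assoc, hab', mul_add, mul_one,
        ← mul_assoc, ← pow_succ]
      have hn : n - 1 + 1 = n := Nat.succ_pred_eq_of_pos hpos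
      rw [← pow_succ, hn]
      push_cast
      simp [add_smul]
      abel

private lemma norm_sq_pow {V : Type*} [NormedAddCommGroup V] [InnerProductSpace ℂ V]
    (a b : Module.End ℂ V) (hab : a * b - b * a = 1)
    (hadj : ∀ x y : V, (inner ℂ (b x) y : ℂ) = inner ℂ x (a y))
    (n : ℕ) (h : V) (hh : a h = 0) :
    ‖(b ^ n) h‖ ^ 2 = (Nat.factorial n : ℝ) * ‖h‖ ^ 2 := by
  induction n with
  | zero => simp
  | succ n ih =>
    have key : ((‖(b ^ (n+1)) h‖ : ℂ)) ^ 2 = ((n : ℂ) + 1) * (‖(b ^ n) h‖ : ℂ) ^ 2 := by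
      have h2 : (b ^ (n+1)) h = b ((b ^ n) h) := by
        rw [pow_succ']; rfl
      have h4 : a ((b ^ (n+1)) h) = ((n : ℂ) + 1) • (b ^ n) h := by
        have := congrArg (fun f : Module.End ℂ V => f h) (comm_pow a b hab (n + 1))
        simp only [Module.End.mul_apply, LinearMap.add_apply, LinearMap.smul_apply,
          Nat.add_sub_cancel] at this
        simpa [hh, Nat.cast_add] using this
      have h5 : (inner ℂ (b ((b ^ n) h)) (b ((b ^ n) h)) : ℂ)
          = ((n : ℂ) + 1) * inner ℂ ((b ^ n) h) ((b ^ n) h) := by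
        rw [hadj, ← h2, h4, inner_smul_right]
      have t1 : (inner ℂ (b ((b ^ n) h)) (b ((b ^ n) h)) : ℂ)
          = ((‖b ((b ^ n) h)‖ : ℂ)) ^ 2 := inner_self_eq_norm_sq_to_K _
      have t2 : (inner ℂ ((b ^ n) h) ((b ^ n) h) : ℂ)
          = ((‖(b ^ n) h‖ : ℂ)) ^ 2 := inner_self_eq_norm_sq_to_K _
      rw [h2]
      linear_combination h5 - t1 + ((n : ℂ) + 1) * t2
    have keyR : ‖(b ^ (n+1)) h‖ ^ 2 = ((n : ℝ) + 1) * ‖(b ^ n) h‖ ^ 2 := by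
      exact_mod_cast key
    rw [keyR, ih, Nat.factorial_succ]
    push_cast
    ring

/-- Let `V` be a complex inner product space, and `a, b : V → V` be `ℂ`-linear maps with
`a ∘ b − b ∘ a = id` and `⟪b x, y⟫ = ⟪x, a y⟫`. If `h ∈ ker a` then for every `n`,
`‖bⁿ h‖² = n! ⬝ ‖h‖²`; consequently the map `(1/√(n!)) • bⁿ` sends `ker a` isometrically
onto `L_{n+1} = bⁿ(ker a)`. -/
theorem norm_pow_raising_vacuum
    {V : Type*} [NormedAddCommGroup V] [InnerProductSpace ℂ V]
    (a b : Module.End ℂ V) (hab : a * b - b * a = 1)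
    (hadj : ∀ x y : V, (inner ℂ (b x) y : ℂ) = inner ℂ x (a y))
    (n : ℕ) :
    (∀ h : V, a h = 0 → ‖(b ^ n) h‖ ^ 2 = (Nat.factorial n : ℝ) * ‖h‖ ^ 2) ∧
      (∀ h : V, a h = 0 →
        ‖((Real.sqrt (Nat.factorial n) : ℂ))⁻¹ • (b ^ n) h‖ = ‖h‖) ∧
      (fun v => ((Real.sqrt (Nat.factorial n) : ℂ))⁻¹ • (b ^ n) v) '' (LinearMap.ker a) =
        (fun v => (b ^ n) v) '' (LinearMap.ker a) := by
  have hfac : (0 : ℝ) < Real.sqrt (Nat.factorial n) :=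
    Real.sqrt_pos.mpr (by exact_mod_cast Nat.factorial_pos n)
  have hc0 : ((Real.sqrt (Nat.factorial n) : ℂ)) ≠ 0 := by
    exact_mod_cast hfac.ne'
  refine ⟨fun h hh => norm_sq_pow a b hab hadj n h hh, ?_, ?_⟩
  · intro h hh
    have h1 := norm_sq_pow a b hab hadj n h hh
    have h2 : ‖(b ^ n) h‖ = Real.sqrt (Nat.factorial n) * ‖h‖ := by
      have : ‖(b ^ n) h‖ = Real.sqrt ((Nat.factorial n : ℝ) * ‖h‖ ^ 2) := by
        rw [← h1, Real.sqrt_sq (norm_nonneg _)]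
      rw [this, Real.sqrt_mul (by positivity), Real.sqrt_sq (norm_nonneg _)]
    rw [norm_smul, h2, norm_inv]
    have : ‖((Real.sqrt (Nat.factorial n) : ℂ))‖ = Real.sqrt (Nat.factorial n) := by
      rw [Complex.norm_real, Real.norm_of_nonneg hfac.le]
    rw [this, ← mul_assoc, inv_mul_cancel₀ hfac.ne', one_mul]
  · ext x
    simp only [Set.mem_image, SetLike.mem_coe, LinearMap.mem_ker]
    constructor
    · rintro ⟨v, hv, rfl⟩
      exact ⟨((Real.sqrt (Nat.factorial n) : ℂ))⁻¹ • v, by simp [hv],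
        by rw [map_smul]⟩
    · rintro ⟨v, hv, rfl⟩
      exact ⟨((Real.sqrt (Nat.factorial n) : ℂ)) • v, by simp [hv],
        by rw [map_smul, smul_smul, inv_mul_cancel₀ hc0, one_smul]⟩
end

section
/- For every h ∈ V and every natural number k ≥ 1, one has a^k h = 0 if and only if b^k (a^k h) = 0. -/
/-- Let `V` be a complex inner product space and `a, b : V → V` be `ℂ`-linear maps with
`a ∘ b − b ∘ a = id` and `⟪b x, y⟫ = ⟪x, a y⟫`. Then for every `h ∈ V` and `k ≥ 1`,
`a^k h = 0 ↔ b^k (a^k h) = 0`. -/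
theorem pow_lowering_eq_zero_iff
    {V : Type*} [NormedAddCommGroup V] [InnerProductSpace ℂ V]
    (a b : Module.End ℂ V) (hab : a * b - b * a = 1)
    (hadj : ∀ x y : V, (inner ℂ (b x) y : ℂ) = inner ℂ x (a y))
    (h : V) (k : ℕ) (hk : 1 ≤ k) :
    (a ^ k) h = 0 ↔ (b ^ k) ((a ^ k) h) = 0 := by
  have key : ∀ (n : ℕ) (x y : V), (inner ℂ ((b ^ n) x) y : ℂ) = inner ℂ x ((a ^ n) y) := by
    intro n
    induction n with
    | zero => simp
    | succ m ih =>
      intro x y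
      rw [pow_succ b m, pow_succ' a m]
      simp only [Module.End.mul_apply]
      rw [ih (b x) y, ← hadj]
  constructor
  · intro hz; rw [hz]; simp
  · intro hz
    have h0 : (inner ℂ ((b ^ k) ((a ^ k) h)) h : ℂ) = 0 := by rw [hz]; simp
    rw [key k _ h] at h0
    exact inner_self_eq_zero.mp h0
end

section
/- Let k ∈ ℂ, h ∈ ker a and ℓ ∈ ℕ. Then J⁺_k (b^ℓ h) = (ℓ + 1 − k) • b^{ℓ+1} h, J⁰_k (b^ℓ h) = (ℓ − (k−1)/2) • b^ℓ h, and J⁻_k (b^ℓ h) = ℓ • b^{ℓ−1} h (the last expression being 0 when ℓ = 0). -/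
/-- Let `V` be a complex vector space and `a, b : V → V` be `ℂ`-linear maps with
`a ∘ b − b ∘ a = id`; for `k ∈ ℂ` set `J⁺ = b∘b∘a − (k−1)•b`, `J⁰ = b∘a − ((k−1)/2)•id`,
`J⁻ = a`. If `h ∈ ker a` and `ℓ ∈ ℕ`, then `J⁺ (b^ℓ h) = (ℓ+1−k) • b^(ℓ+1) h`,
`J⁰ (b^ℓ h) = (ℓ − (k−1)/2) • b^ℓ h`, and `J⁻ (b^ℓ h) = ℓ • b^(ℓ−1) h`
(the latter being `0` when `ℓ = 0`). -/
theorem sl2_action_on_lifted_vacuum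
    {V : Type*} [AddCommGroup V] [Module ℂ V]
    (a b : Module.End ℂ V) (hab : a * b - b * a = 1)
    (k : ℂ)
    (Jp J0 Jm : Module.End ℂ V)
    (hJp : Jp = b * b * a - (k - 1) • b)
    (hJ0 : J0 = b * a - ((k - 1) / 2) • (1 : Module.End ℂ V))
    (hJm : Jm = a)
    (h : V) (hh : a h = 0) (ℓ : ℕ) :
    Jp ((b ^ ℓ) h) = ((ℓ : ℂ) + 1 - k) • (b ^ (ℓ + 1)) h ∧
      J0 ((b ^ ℓ) h) = ((ℓ : ℂ) - (k - 1) / 2) • (b ^ ℓ) h ∧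
      Jm ((b ^ ℓ) h) = (ℓ : ℂ) • (b ^ (ℓ - 1)) h := by
  have hab' : ∀ v : V, a (b v) = v + b (a v) := by
    intro v
    have := congrArg (fun f : Module.End ℂ V => f v) hab
    simpa [Module.End.mul_apply, sub_eq_iff_eq_add] using this
  have key : ∀ n : ℕ, a ((b ^ n) h) = (n : ℂ) • (b ^ (n - 1)) h := by
    intro n
    induction n with
    | zero => simpa using hh
    | succ m ih =>
      have hb : (b ^ (m + 1)) h = b ((b ^ m) h) := by
        rw [pow_succ']; rfl
      rw [hb, hab', ih, map_smul]
      rcases Nat.eq_zero_or_pos m with hm | hm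
      · subst hm; simp
      · have h1 : b ((b ^ (m - 1)) h) = (b ^ m) h := by
          conv_rhs => rw [← Nat.succ_pred_eq_of_pos hm]
          rw [pow_succ']; rfl
        rw [h1]
        push_cast
        rw [add_smul, one_smul, add_comm]
  refine ⟨?_, ?_, ?_⟩
  · subst hJp
    simp only [LinearMap.sub_apply, LinearMap.smul_apply, Module.End.mul_apply]
    rw [key ℓ]
    rcases Nat.eq_zero_or_pos ℓ with hl | hl
    · subst hl; simp [← neg_smul]
    · have h1 : b (b ((b ^ (ℓ - 1)) h)) = (b ^ (ℓ + 1)) h := by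
        conv_rhs => rw [← Nat.succ_pred_eq_of_pos hl]
        rw [pow_succ', pow_succ']; rfl
      rw [map_smul, map_smul, h1]
      have h2 : b ((b ^ ℓ) h) = (b ^ (ℓ + 1)) h := by rw [pow_succ']; rfl
      rw [h2, ← sub_smul]; ring_nf
  · subst hJ0
    simp only [LinearMap.sub_apply, LinearMap.smul_apply, Module.End.mul_apply,
      Module.End.one_apply]
    rw [key ℓ, map_smul]
    rcases Nat.eq_zero_or_pos ℓ with hl | hl
    · subst hl; simp
    · have h1 : b ((b ^ (ℓ - 1)) h) = (b ^ ℓ) h := by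
        conv_rhs => rw [← Nat.succ_pred_eq_of_pos hl]
        rw [pow_succ']; rfl
      rw [h1, ← sub_smul]
  · subst hJm; exact key ℓ
end

section
/- For every positive integer k, the subspace V_k := L_1 + L_2 + ⋯ + L_k = Σ_{j=0}^{k−1} b^j(ker a) is invariant under each of the operators J⁺_k, J⁰_k and J⁻_k; that is, these three sl(2)-generators map V_k into V_k. -/
/-- Let `V` be a complex vector space and `a, b : V → V` be `ℂ`-linear maps with
`a ∘ b − b ∘ a = id`. For a positive integer `k`, the subspace
`V_k = L₁ + ⋯ + L_k = Σ_{j=0}^{k−1} b^j(ker a)` is invariant under each of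
`J⁺_k = b∘b∘a − (k−1)•b`, `J⁰_k = b∘a − ((k−1)/2)•id` and `J⁻_k = a`. -/
theorem sl2_invariance_of_poly_space
    {V : Type*} [AddCommGroup V] [Module ℂ V]
    (a b : Module.End ℂ V) (hab : a * b - b * a = 1)
    (k : ℕ) (hk : 1 ≤ k)
    (Jp J0 Jm : Module.End ℂ V)
    (hJp : Jp = b * b * a - ((k : ℂ) - 1) • b)
    (hJ0 : J0 = b * a - (((k : ℂ) - 1) / 2) • (1 : Module.End ℂ V))
    (hJm : Jm = a)
    (Vk : Submodule ℂ V)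
    (hVk : Vk = ⨆ j ∈ Finset.range k, Submodule.map (b ^ j) (LinearMap.ker a)) :
    ∀ x ∈ Vk, Jp x ∈ Vk ∧ J0 x ∈ Vk ∧ Jm x ∈ Vk := by
  have hba : a * b = 1 + b * a := sub_eq_iff_eq_add.mp hab
  -- key commutation on kernel vectors
  have key : ∀ (n : ℕ) (v : V), a v = 0 → a ((b ^ n) v) = (n : ℂ) • ((b ^ (n - 1)) v) := by
    intro n
    induction n with
    | zero => intro v hv; simpa using hv
    | succ m ih =>
      intro v hv
      have h1 : (b ^ (m + 1)) v = b ((b ^ m) v) := by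
        rw [pow_succ']; rfl
      have h2 : a (b ((b ^ m) v)) = (b ^ m) v + b (a ((b ^ m) v)) := by
        have := congrArg (fun f : Module.End ℂ V => f ((b ^ m) v)) hba
        simpa using this
      rw [h1, h2, ih v hv, map_smul]
      cases m with
      | zero => simp
      | succ p =>
        have h3 : b ((b ^ (p + 1 - 1)) v) = (b ^ (p + 1)) v := by
          simp only [Nat.add_sub_cancel]
          rw [pow_succ']; rfl
        rw [h3]
        simp only [Nat.add_sub_cancel]
        push_cast
        module
  have hmem : ∀ j, j < k → ∀ v : V, a v = 0 → (b ^ j) v ∈ Vk := by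
    intro j hj v hv
    rw [hVk]
    exact (le_iSup₂ (f := fun j (_ : j ∈ Finset.range k) => Submodule.map (b ^ j) (LinearMap.ker a))
      j (Finset.mem_range.mpr hj)) ⟨v, hv, rfl⟩
  -- reduce to generators
  have main : ∀ (f : Module.End ℂ V),
      (∀ j, j < k → ∀ v : V, a v = 0 → f ((b ^ j) v) ∈ Vk) → ∀ x ∈ Vk, f x ∈ Vk := by
    intro f hf x hx
    have : Vk ≤ Submodule.comap f Vk := by
      rw [hVk]
      apply iSup₂_le
      intro j hj
      rintro y ⟨v, hv, rfl⟩
      exact Submodule.mem_comap.mpr (hVk ▸ hf j (Finset.mem_range.mp hj) v hv)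
    exact this hx
  intro x hx
  refine ⟨?_, ?_, ?_⟩
  · subst hJp
    refine main _ (fun j hj v hv => ?_) x hx
    have : (b * b * a - ((k : ℂ) - 1) • b) ((b ^ j) v)
        = ((j : ℂ) - ((k : ℂ) - 1)) • ((b ^ (j + 1)) v) := by
      have hbj : b ((b ^ j) v) = (b ^ (j + 1)) v := by rw [pow_succ']; rfl
      cases j with
      | zero =>
        have h0 : (b ^ (0 + 1)) v = b v := by simp
        simp only [LinearMap.sub_apply, Module.End.mul_apply, LinearMap.smul_apply, pow_zero,
          Module.End.one_apply, hv, map_zero, Nat.cast_zero, h0]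
        module
      | succ p =>
        simp only [LinearMap.sub_apply, Module.End.mul_apply, LinearMap.smul_apply]
        rw [key (p + 1) v hv]
        simp only [Nat.add_sub_cancel, map_smul]
        have h4 : b ((b ^ p) v) = (b ^ (p + 1)) v := by rw [pow_succ']; rfl
        rw [h4, hbj]
        module
    rw [this]
    rcases lt_or_eq_of_le (Nat.succ_le_of_lt hj) with h | h
    · exact Submodule.smul_mem _ _ (hmem (j + 1) h v hv)
    · have : ((j : ℂ) - ((k : ℂ) - 1)) = 0 := by
        rw [← h]; push_cast; ring
      rw [this, zero_smul]; exact Submodule.zero_mem _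
  · subst hJ0
    refine main _ (fun j hj v hv => ?_) x hx
    have : (b * a - (((k : ℂ) - 1) / 2) • (1 : Module.End ℂ V)) ((b ^ j) v)
        = ((j : ℂ) - ((k : ℂ) - 1) / 2) • ((b ^ j) v) := by
      simp only [LinearMap.sub_apply, Module.End.mul_apply, LinearMap.smul_apply,
        Module.End.one_apply]
      rw [key j v hv, map_smul]
      cases j with
      | zero => simp
      | succ p =>
        have h3 : b ((b ^ (p + 1 - 1)) v) = (b ^ (p + 1)) v := by
          simp only [Nat.add_sub_cancel]; rw [pow_succ']; rfl
        rw [h3]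
        module
    rw [this]
    exact Submodule.smul_mem _ _ (hmem j hj v hv)
  · subst hJm
    refine main _ (fun j hj v hv => ?_) x hx
    rw [key j v hv]
    cases j with
    | zero => simp
    | succ p =>
      simp only [Nat.add_sub_cancel]
      exact Submodule.smul_mem _ _ (hmem p (Nat.lt_of_succ_lt hj) v hv)
end

section
/- Let k ≥ 1 and let f₁, …, f_k : ℂ → ℂ be entire functions. Define ψ = Σ_{p=1}^{k} (1/√((p−1)!)) • (A†)^[p−1] (fun z w ↦ f_p z). Then for all z, w ∈ ℂ: ψ z w = Σ_{ℓ=1}^{k} w^{ℓ−1} · φ_ℓ(z), where φ_ℓ(z) = Σ_{p=ℓ}^{k} (−1)^{p−ℓ} · (√((p−1)!)/((p−ℓ)!·(ℓ−1)!)) · (iteratedDeriv (p−ℓ) f_p) z. -/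
/-- The creation operator `a† = z̄ − ∂/∂z` acting on functions `f : ℂ → ℂ → ℂ` of two
complex variables, the second variable `w` playing the role of `z̄`. -/
noncomputable def creationOp (f : ℂ → ℂ → ℂ) : ℂ → ℂ → ℂ :=
  fun z w => w * f z w - deriv (fun z' => f z' w) z

open Finset

lemma binom_step (x : ℂ) (d : ℕ → ℂ) (n : ℕ) :
    x * (∑ j ∈ range (n+1), (n.choose j : ℂ) * (-1)^j * x^(n-j) * d j)
      - ∑ j ∈ range (n+1), (n.choose j : ℂ) * (-1)^j * x^(n-j) * d (j+1)
    = ∑ j ∈ range (n+2), ((n+1).choose j : ℂ) * (-1)^j * x^(n+1-j) * d j := by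
  have key : ∑ j ∈ range (n+2), ((n+1).choose j : ℂ) * (-1)^j * x^(n+1-j) * d j
      = ∑ j ∈ range (n+1), ((n.choose j : ℂ) * ((-1)^(j+1) * x^(n-j) * d (j+1)))
        + ∑ j ∈ range (n+2), (n.choose j : ℂ) * (-1)^j * x^(n+1-j) * d j := by
    rw [Finset.sum_range_succ' (fun j => ((n+1).choose j : ℂ) * (-1)^j * x^(n+1-j) * d j) (n+1),
        Finset.sum_range_succ' (fun j => (n.choose j : ℂ) * (-1)^j * x^(n+1-j) * d j) (n+1)]
    have hterm : ∀ j ∈ range (n+1),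
        (((n+1).choose (j+1) : ℕ) : ℂ) * (-1)^(j+1) * x^(n+1-(j+1)) * d (j+1)
          = (n.choose j : ℂ) * ((-1)^(j+1) * x^(n-j) * d (j+1))
            + (n.choose (j+1) : ℂ) * (-1)^(j+1) * x^(n+1-(j+1)) * d (j+1) := by
      intro j _
      have h0 : (n+1).choose (j+1) = n.choose j + n.choose (j+1) := Nat.choose_succ_succ n j
      have h2 : n + 1 - (j + 1) = n - j := by omega
      rw [h0, h2]
      push_cast
      ring
    rw [Finset.sum_congr rfl hterm, Finset.sum_add_distrib]
    simp only [Nat.choose_zero_right]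
    ring
  rw [key, Finset.sum_range_succ (fun j => (n.choose j : ℂ) * (-1)^j * x^(n+1-j) * d j) (n+1),
      Nat.choose_succ_self]
  rw [Finset.mul_sum, ← Finset.sum_sub_distrib]
  simp only [Nat.cast_zero, zero_mul, add_zero]
  rw [← Finset.sum_add_distrib]
  refine Finset.sum_congr rfl fun j hj => ?_
  have hj' : j ≤ n := Nat.lt_succ_iff.mp (Finset.mem_range.mp hj)
  have h1 : n + 1 - j = (n - j) + 1 := by omega
  rw [h1, pow_succ]
  ring

lemma creationOp_iterate (g : ℂ → ℂ) (hg : Differentiable ℂ g) (n : ℕ) :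
    creationOp^[n] (fun z _ => g z) = fun z w =>
      ∑ j ∈ range (n + 1),
        (n.choose j : ℂ) * (-1) ^ j * w ^ (n - j) * iteratedDeriv j g z := by
  have hd : ∀ j : ℕ, Differentiable ℂ (iteratedDeriv j g) := fun j =>
    (hg.contDiff (n := ⊤)).differentiable_iteratedDeriv j (by simp)
  induction n with
  | zero => funext z w; simp
  | succ n ih =>
    rw [Function.iterate_succ_apply', ih]
    funext z w
    have hder : HasDerivAt (fun z' => ∑ j ∈ range (n + 1),
        (n.choose j : ℂ) * (-1) ^ j * w ^ (n - j) * iteratedDeriv j g z')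
        (∑ j ∈ range (n + 1),
          (n.choose j : ℂ) * (-1) ^ j * w ^ (n - j) * iteratedDeriv (j+1) g z) z := by
      refine HasDerivAt.fun_sum fun j _ => ?_
      have h1 : HasDerivAt (iteratedDeriv j g) (iteratedDeriv (j+1) g z) z := by
        simpa [iteratedDeriv_succ] using ((hd j) z).hasDerivAt
      simpa [mul_assoc] using h1.const_mul ((n.choose j : ℂ) * (-1) ^ j * w ^ (n - j))
    simp only [creationOp]
    rw [hder.deriv]
    exact binom_step w (fun j => iteratedDeriv j g z) n

/-- Let `k ≥ 1` and `f₁, …, f_k : ℂ → ℂ` be entire. Define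
`ψ = Σ_{p=1}^{k} (1/√((p−1)!)) • (A†)^[p−1] (fun z w ↦ f_p z)`. Then for all `z, w`,
`ψ z w = Σ_{ℓ=1}^{k} w^(ℓ−1) · φ_ℓ(z)` where
`φ_ℓ(z) = Σ_{p=ℓ}^{k} (−1)^(p−ℓ) (√((p−1)!)/((p−ℓ)!(ℓ−1)!)) f_p^((p−ℓ))(z)`. -/
theorem poly_fock_representation
    (k : ℕ) (hk : 1 ≤ k) (f : ℕ → ℂ → ℂ)
    (hf : ∀ p ∈ Finset.Icc 1 k, Differentiable ℂ (f p))
    (ψ : ℂ → ℂ → ℂ)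
    (hψ : ψ = ∑ p ∈ Finset.Icc 1 k,
        ((Real.sqrt (Nat.factorial (p - 1)) : ℂ))⁻¹ •
          creationOp^[p - 1] (fun z _ => f p z))
    (z w : ℂ) :
    ψ z w = ∑ ℓ ∈ Finset.Icc 1 k, w ^ (ℓ - 1) *
      ∑ p ∈ Finset.Icc ℓ k,
        (-1 : ℂ) ^ (p - ℓ) *
          ((Real.sqrt (Nat.factorial (p - 1)) : ℂ) /
            ((Nat.factorial (p - ℓ) * Nat.factorial (ℓ - 1) : ℕ) : ℂ)) *
          iteratedDeriv (p - ℓ) (f p) z := by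
  have hswap : (∑ ℓ ∈ Finset.Icc 1 k, w ^ (ℓ - 1) *
      ∑ p ∈ Finset.Icc ℓ k,
        (-1 : ℂ) ^ (p - ℓ) *
          ((Real.sqrt (Nat.factorial (p - 1)) : ℂ) /
            ((Nat.factorial (p - ℓ) * Nat.factorial (ℓ - 1) : ℕ) : ℂ)) *
          iteratedDeriv (p - ℓ) (f p) z)
      = ∑ p ∈ Finset.Icc 1 k, ∑ ℓ ∈ Finset.Icc 1 p, w ^ (ℓ - 1) *
          ((-1 : ℂ) ^ (p - ℓ) *
          ((Real.sqrt (Nat.factorial (p - 1)) : ℂ) /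
            ((Nat.factorial (p - ℓ) * Nat.factorial (ℓ - 1) : ℕ) : ℂ)) *
          iteratedDeriv (p - ℓ) (f p) z) := by
    simp_rw [Finset.mul_sum]
    exact Finset.sum_comm' (by intro ℓ p; simp only [Finset.mem_Icc]; omega)
  rw [hψ, hswap]
  simp only [Finset.sum_apply, Pi.smul_apply, smul_eq_mul]
  refine Finset.sum_congr rfl fun p hp => ?_
  rw [creationOp_iterate (f p) (hf p hp), Finset.mul_sum]
  obtain ⟨hp1, hpk⟩ := Finset.mem_Icc.mp hp
  refine Finset.sum_nbij' (fun j => p - j) (fun ℓ => p - ℓ) ?_ ?_ ?_ ?_ ?_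
  · intro a ha; simp only [Finset.mem_range, Finset.mem_Icc] at *; omega
  · intro a ha; simp only [Finset.mem_range, Finset.mem_Icc] at *; omega
  · intro a ha; simp only [Finset.mem_range] at ha; show p - (p - a) = a; omega
  · intro a ha; simp only [Finset.mem_Icc] at ha; show p - (p - a) = a; omega
  · intro j hj
    simp only [Finset.mem_range] at hj
    have e1 : p - (p - j) = j := by omega
    have e2 : p - j - 1 = p - 1 - j := by omega
    rw [e1, e2]
    have hjle : j ≤ p - 1 := by omega
    have hm : ((j.factorial * (p - 1 - j).factorial : ℕ) : ℂ) ≠ 0 :=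
      Nat.cast_ne_zero.mpr (by positivity)
    have hne : (Real.sqrt ((p - 1).factorial) : ℂ) ≠ 0 := by
      simp only [ne_eq, Complex.ofReal_eq_zero]
      positivity
    have hC : ((p - 1).choose j : ℂ) * ((j.factorial * (p - 1 - j).factorial : ℕ) : ℂ)
        = (((p - 1).factorial : ℕ) : ℂ) := by
      rw [← Nat.cast_mul]
      norm_cast
      rw [← Nat.choose_mul_factorial_mul_factorial hjle]
      ring
    have hs : (Real.sqrt ((p - 1).factorial) : ℂ) * (Real.sqrt ((p - 1).factorial) : ℂ)
        = (((p - 1).factorial : ℕ) : ℂ) := by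
      rw [← Complex.ofReal_mul, Real.mul_self_sqrt (by positivity)]
      norm_cast
    have h1 : (Real.sqrt ((p - 1).factorial) : ℂ)⁻¹ * ((p - 1).choose j : ℂ)
        = (Real.sqrt ((p - 1).factorial) : ℂ) / ((j.factorial * (p - 1 - j).factorial : ℕ) : ℂ) := by
      rw [eq_div_iff hm, mul_assoc, hC, ← hs, ← mul_assoc, inv_mul_cancel₀ hne, one_mul]
    rw [← h1]
    ring
end

section
/- Let α ∈ ℂ with |α| = 1 and define the rotation operator (U_α f)(w) = f(conj(α)·w). If f : ℂ → ℂ is ℝ-differentiable, then for every w ∈ ℂ one has (A† f)(conj(α)·w) = α · (A†(U_α f))(w); equivalently, U_α ∘ A† = α • (A† ∘ U_α). -/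
/-- The Wirtinger derivative `∂f(w) = (1/2)(∂f/∂x − i ∂f/∂y)(w)` of a function
`f : ℂ → ℂ`, expressed via the real Fréchet derivative. -/
noncomputable def wirtingerDeriv (f : ℂ → ℂ) (w : ℂ) : ℂ :=
  (1 / 2) * ((fderiv ℝ f w) 1 - Complex.I * (fderiv ℝ f w) Complex.I)

/-- The creation operator `(a† f)(w) = w̄ · f(w) − ∂f(w)`. -/
noncomputable def creationOp1 (f : ℂ → ℂ) (w : ℂ) : ℂ :=
  (starRingEnd ℂ) w * f w - wirtingerDeriv f w

/-- Let `|α| = 1` and `(U_α f)(w) = f(ᾱ w)`. If `f : ℂ → ℂ` is `ℝ`-differentiable, then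
`(A† f)(ᾱ w) = α · (A†(U_α f))(w)` for every `w`; equivalently
`U_α ∘ A† = α • (A† ∘ U_α)`. -/
theorem rotation_comm_creationOp
    (α : ℂ) (hα : ‖α‖ = 1) (f : ℂ → ℂ) (hf : Differentiable ℝ f) (w : ℂ) :
    creationOp1 f ((starRingEnd ℂ) α * w) =
      α * creationOp1 (fun w' => f ((starRingEnd ℂ) α * w')) w := by
  set c : ℂ := (starRingEnd ℂ) α with hc_def
  have hαc : α * c = 1 := by
    rw [hc_def, Complex.mul_conj]
    norm_cast
    rw [← Complex.sq_norm]
    simp [hα]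
  -- the linear map w' ↦ c * w'
  set L : ℂ →L[ℝ] ℂ := c • (ContinuousLinearMap.id ℝ ℂ) with hL_def
  have hL : ∀ z, L z = c * z := fun z => rfl
  set D := fderiv ℝ f (c * w) with hD_def
  have hg : fderiv ℝ (fun w' => f (c * w')) w = D.comp L := by
    refine HasFDerivAt.fderiv ?_
    have h1 : HasFDerivAt (fun w' : ℂ => c * w') L w := by
      have := (ContinuousLinearMap.id ℝ ℂ).hasFDerivAt (x := w)
      exact this.const_smul c
    exact (hf (c * w)).hasFDerivAt.comp w h1
  have hcre : ((c.re : ℂ)) + (c.im : ℂ) * Complex.I = c := by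
    simpa using (Complex.re_add_im c)
  have hDc : D c = (c.re : ℂ) * D 1 + (c.im : ℂ) * D Complex.I := by
    calc D c = D ((c.re : ℝ) • (1:ℂ) + (c.im : ℝ) • Complex.I) := by
          congr 1
          push_cast
          rw [Complex.real_smul, Complex.real_smul]
          push_cast
          linear_combination -hcre
      _ = (c.re : ℂ) * D 1 + (c.im : ℂ) * D Complex.I := by
          rw [map_add, map_smul, map_smul]
          simp [Complex.real_smul]
  have hDci : D (c * Complex.I) = (-c.im : ℂ) * D 1 + (c.re : ℂ) * D Complex.I := by
    calc D (c * Complex.I) = D ((-c.im : ℝ) • (1:ℂ) + (c.re : ℝ) • Complex.I) := by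
          congr 1
          rw [Complex.real_smul, Complex.real_smul]
          push_cast
          linear_combination -Complex.I * hcre + (c.im : ℂ) * Complex.I_sq
      _ = (-c.im : ℂ) * D 1 + (c.re : ℂ) * D Complex.I := by
          rw [map_add, map_smul, map_smul]
          push_cast
          simp [Complex.real_smul]
  have hconj : (starRingEnd ℂ) (c * w) = α * (starRingEnd ℂ) w := by
    rw [map_mul, hc_def, Complex.conj_conj]
  simp only [creationOp1, wirtingerDeriv, hg, hconj, ← hD_def,
    ContinuousLinearMap.comp_apply, hL, mul_one]
  rw [hDc, hDci]
  have hI : Complex.I ^ 2 = -1 := Complex.I_sq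
  linear_combination (1/2)*α*(D 1)*hcre - (1/2)*α*Complex.I*(D Complex.I)*hcre +
    (1/2)*(D 1 - Complex.I * D Complex.I)*hαc + (1/2)*α*(c.im:ℂ)*(D Complex.I)*hI
end

section
/- If h, g ∈ V are vacuum vectors and p, q are multi-indices with p ≠ q, then ⟪b^p h, b^q g⟫ = 0; that is, the images of the vacuum space under distinct monomials in the raising operators are pairwise orthogonal. -/
lemma extract_ofFn {M : Type*} [Monoid M] : ∀ {d : ℕ} (c : Fin d → M),
    (∀ i j, Commute (c i) (c j)) → ∀ i : Fin d,
    (List.ofFn c).prod = c i * (List.ofFn (Function.update c i 1)).prod := by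
  intro d
  induction d with
  | zero => intro c _ i; exact i.elim0
  | succ d ih =>
    intro c hc i
    rw [List.ofFn_succ]
    induction i using Fin.cases with
    | zero =>
      have h1 : Function.update c 0 1 0 = 1 := by simp
      have h2 : (fun j : Fin d => Function.update c 0 1 j.succ) = fun j => c j.succ := by
        funext j; simp [Function.update_of_ne (Fin.succ_ne_zero j)]
      simp [List.ofFn_succ, h1, h2]
    | succ k =>
      have h1 : Function.update c k.succ 1 0 = c 0 := by
        simp [Function.update_of_ne (Fin.succ_ne_zero k).symm]
      have h2 : (fun j : Fin d => Function.update c k.succ 1 j.succ)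
          = Function.update (fun j => c j.succ) k 1 := by
        funext j
        by_cases hj : j = k
        · subst hj; simp
        · simp [Function.update_of_ne hj,
            Function.update_of_ne (fun hh => hj (Fin.succ_injective _ hh))]
      rw [List.ofFn_succ, h1, h2, List.prod_cons, List.prod_cons,
        ih (fun j => c j.succ) (fun i j => hc _ _) k]
      rw [← mul_assoc, ← mul_assoc, (hc 0 k.succ).eq]

lemma comm_pow_aux {R : Type*} [Ring R] (x y : R) (hxy : x * y - y * x = 1) (n : ℕ) :
    x * y ^ n = y ^ n * x + n • y ^ (n - 1) := by
  have hxy' : x * y = y * x + 1 := by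
    rw [← hxy]; noncomm_ring
  induction n with
  | zero => simp
  | succ n ih =>
    rw [pow_succ, ← mul_assoc, ih, add_mul, mul_assoc, hxy']
    cases n with
    | zero => simp [mul_add]
    | succ m =>
      simp only [Nat.succ_sub_one]
      rw [mul_add, mul_one, ← mul_assoc, ← pow_succ, smul_mul_assoc, ← pow_succ]
      rw [add_assoc, add_nsmul, one_nsmul]
      congr 1
      simp only [succ_nsmul]; abel


/-- Let `V` be a complex inner product space with `ℂ`-linear maps
`a₁,…,a_d, b₁,…,b_d : V → V` satisfying `aᵢ∘b_j − b_j∘aᵢ = δᵢⱼ•id`, mutually commuting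
`aᵢ`'s and mutually commuting `bᵢ`'s, and `⟪bᵢ x, y⟫ = ⟪x, aᵢ y⟫`. If `h, g` are vacuum
vectors and `p ≠ q` are multi-indices, then `⟪b^p h, b^q g⟫ = 0`: the images of the
vacuum space under distinct monomials in the raising operators are pairwise orthogonal. -/
theorem orthogonality_multi_lifted_vacuum
    {V : Type*} [NormedAddCommGroup V] [InnerProductSpace ℂ V]
    {d : ℕ} (a b : Fin d → Module.End ℂ V)
    (hcomm : ∀ i j, a i * b j - b j * a i =
      if i = j then (1 : Module.End ℂ V) else 0)
    (haa : ∀ i j, a i * a j = a j * a i)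
    (hbb : ∀ i j, b i * b j = b j * b i)
    (hadj : ∀ i (x y : V), (inner ℂ ((b i) x) y : ℂ) = inner ℂ x ((a i) y))
    (h g : V) (hh : ∀ i, (a i) h = 0) (hg : ∀ i, (a i) g = 0)
    (p q : Fin d → ℕ) (hpq : p ≠ q) :
    (inner ℂ (((List.ofFn fun i => (b i) ^ (p i)).prod) h)
      (((List.ofFn fun i => (b i) ^ (q i)).prod) g) : ℂ) = 0 := by
  set P : (Fin d → ℕ) → Module.End ℂ V :=
    fun r => (List.ofFn fun i => (b i) ^ (r i)).prod with hP
  -- the b i pairwise commute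
  have hbC : ∀ i j, Commute (b i) (b j) := fun i j => hbb i j
  -- extraction of the i-th factor
  have hext : ∀ (r : Fin d → ℕ) (i : Fin d),
      P r = b i ^ r i * P (Function.update r i 0) := by
    intro r i
    have hc : ∀ j k, Commute ((fun j => b j ^ r j) j) ((fun j => b j ^ r j) k) :=
      fun j k => (hbC j k).pow_pow _ _
    have := extract_ofFn (fun j => b j ^ r j) hc i
    simp only [hP]
    rw [this]
    congr 1
    apply congrArg
    apply congrArg
    funext j
    by_cases hj : j = i
    · subst hj; simp
    · simp [Function.update_of_ne hj]
  -- extraction when r i ≠ 0, with one b i pulled out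
  have hext1 : ∀ (r : Fin d → ℕ) (i : Fin d), r i ≠ 0 →
      P r = b i * P (Function.update r i (r i - 1)) := by
    intro r i hri
    rw [hext r i, hext (Function.update r i (r i - 1)) i]
    simp only [Function.update_self, Function.update_idem]
    rw [← mul_assoc, ← pow_succ']
    congr 2
    omega
  -- a i commutes with P r when r i = 0
  have hAcomm : ∀ (r : Fin d → ℕ) (i : Fin d), r i = 0 →
      a i * P r = P r * a i := by
    intro r i hri
    have : Commute (a i) (P r) := by
      apply Commute.list_prod_right
      intro x hx
      rw [List.mem_ofFn] at hx
      obtain ⟨j, rfl⟩ := hx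
      show Commute (a i) (b j ^ r j)
      by_cases hj : j = i
      · subst hj; rw [hri]; simp
      · apply Commute.pow_right
        have := hcomm i j
        rw [if_neg (fun e => hj e.symm)] at this
        exact sub_eq_zero.mp this
    exact this.eq
  -- key: a i (P r v) = r i • P (update r i (r i - 1)) v for vacuum v
  have hkey : ∀ (r : Fin d → ℕ) (i : Fin d) (v : V), a i v = 0 →
      a i (P r v) = (r i : ℂ) • (P (Function.update r i (r i - 1)) v) := by
    intro r i v hv
    have h1 : a i * b i - b i * a i = 1 := by
      have := hcomm i i; rwa [if_pos rfl] at this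
    have h2 := comm_pow_aux (a i) (b i) h1 (r i)
    have hQ := hAcomm (Function.update r i 0) i (by simp)
    have hop : a i * P r
        = b i ^ r i * P (Function.update r i 0) * a i
          + r i • (b i ^ (r i - 1) * P (Function.update r i 0)) := by
      rw [hext r i, ← mul_assoc, h2, add_mul, smul_mul_assoc, mul_assoc,
        hQ, ← mul_assoc]
    have hPr' : b i ^ (r i - 1) * P (Function.update r i 0)
        = P (Function.update r i (r i - 1)) := by
      rw [hext (Function.update r i (r i - 1)) i]
      simp [Function.update_idem]
    rw [hPr'] at hop
    have := congrArg (fun (T : Module.End ℂ V) => T v) hop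
    simp only [LinearMap.add_apply, Module.End.mul_apply, LinearMap.smul_apply] at this
    rw [hv, map_zero, map_zero, zero_add] at this
    rw [this]
    rw [← Nat.cast_smul_eq_nsmul ℂ]
  -- P 0-like product is the identity
  have hPone : ∀ r : Fin d → ℕ, (∀ i, r i = 0) → P r = 1 := by
    intro r hr
    rw [hP]
    apply List.prod_eq_one
    intro x hx
    rw [List.mem_ofFn] at hx
    obtain ⟨j, rfl⟩ := hx
    show b j ^ r j = 1
    rw [hr j, pow_zero]
  -- main induction
  have main : ∀ (n : ℕ) (r s : Fin d → ℕ), (∑ i, r i) + (∑ i, s i) ≤ n → r ≠ s →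
      (inner ℂ (P r h) (P s g) : ℂ) = 0 := by
    intro n
    induction n with
    | zero =>
      intro r s hsum hrs
      exfalso
      apply hrs
      funext i
      have h1 : r i = 0 := by
        have := Finset.single_le_sum (f := r) (fun j _ => Nat.zero_le _)
          (Finset.mem_univ i)
        omega
      have h2 : s i = 0 := by
        have := Finset.single_le_sum (f := s) (fun j _ => Nat.zero_le _)
          (Finset.mem_univ i)
        omega
      rw [h1, h2]
    | succ n ih =>
      intro r s hsum hrs
      by_cases hr0 : ∀ i, r i = 0
      · -- r = 0, so s has a nonzero entry; use adjointness via conjugation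
        have hs0 : ∃ i, s i ≠ 0 := by
          by_contra hc
          push_neg at hc
          exact hrs (funext fun i => by rw [hr0 i, hc i])
        obtain ⟨i, hi⟩ := hs0
        rw [hPone r hr0, hext1 s i hi, ← inner_conj_symm]
        simp only [Module.End.mul_apply, Module.End.one_apply]
        rw [hadj i, hh i, inner_zero_right, map_zero]
      · push_neg at hr0
        obtain ⟨i, hi⟩ := hr0
        rw [hext1 r i hi]
        simp only [Module.End.mul_apply]
        rw [hadj i, hkey s i g (hg i), inner_smul_right]
        by_cases hsi : s i = 0
        · rw [hsi]; simp
        · have hne : Function.update r i (r i - 1) ≠ Function.update s i (s i - 1) := by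
            intro he
            apply hrs
            funext j
            have hj := congrFun he j
            by_cases hji : j = i
            · subst hji
              simp only [Function.update_self] at hj
              omega
            · simpa [Function.update_of_ne hji] using hj
          have hsum' : (∑ j, Function.update r i (r i - 1) j)
              + (∑ j, Function.update s i (s i - 1) j) ≤ n := by
            have e1 : ∑ j, Function.update r i (r i - 1) j
                = (r i - 1) + ∑ j ∈ Finset.univ.erase i, r j := by
              rw [← Finset.add_sum_erase _ _ (Finset.mem_univ i)]
              congr 1
              · simp
              · apply Finset.sum_congr rfl
                intro j hj
                rw [Function.update_of_ne (Finset.ne_of_mem_erase hj)]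
            have e2 : ∑ j, Function.update s i (s i - 1) j
                = (s i - 1) + ∑ j ∈ Finset.univ.erase i, s j := by
              rw [← Finset.add_sum_erase _ _ (Finset.mem_univ i)]
              congr 1
              · simp
              · apply Finset.sum_congr rfl
                intro j hj
                rw [Function.update_of_ne (Finset.ne_of_mem_erase hj)]
            have e3 : ∑ j, r j = r i + ∑ j ∈ Finset.univ.erase i, r j :=
              (Finset.add_sum_erase _ _ (Finset.mem_univ i)).symm
            have e4 : ∑ j, s j = s i + ∑ j ∈ Finset.univ.erase i, s j :=
              (Finset.add_sum_erase _ _ (Finset.mem_univ i)).symm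
            rw [e1, e2]
            rw [e3, e4] at hsum
            omega
          rw [ih _ _ hsum' hne, mul_zero]
  exact main _ p q le_rfl hpq
end
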